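/- Let n be a natural number, p ∈ [0,1], ρ ∈ [0, 1/2], Δ ≥ 0 real, with n·p ≤ 1 and Δ·n·p ≤ 1. Define α = 1 − (1−p)^⌈(1−ρ)n⌉ and γ = α/(1 + Δ·α). Then γ ≥ n·p/8. -/

import Mathlib

/-!
With `m = ⌈(1 - ρ) n⌉₊ ∈ [n/2, n]` we have `m p ≤ 1`. The estimate `(1 - p)^m ≤ exp (-m p) ≤
1 / (1 + m p)` gives `α ≥ m p / (1 + m p) ≥ m p / 2 ≥ n p / 4`, while Bernoulli's inequality gives
`α ≤ m p ≤ n p`, hence `Δ α ≤ 1` and `γ = α / (1 + Δ α) ≥ α / 2 ≥ n p / 8`.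
-/

open Real

lemma one_sub_pow_le_inv_one_add_mul {p : ℝ} (hp0 : 0 ≤ p) (hp1 : p ≤ 1) (m : ℕ) :
    (1 - p) ^ m ≤ (1 + m * p)⁻¹ :=
  calc (1 - p) ^ m ≤ exp (-p) ^ m := by
        gcongr
        exact one_sub_le_exp_neg p
    _ = (exp (m * p))⁻¹ := by rw [← exp_nat_mul, mul_neg, exp_neg]
    _ ≤ (1 + m * p)⁻¹ := by
        gcongr
        linarith [add_one_le_exp (m * p)]

lemma mul_div_two_le_one_sub_one_sub_pow {p : ℝ} (hp0 : 0 ≤ p) (hp1 : p ≤ 1) {m : ℕ}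
    (hmp : m * p ≤ 1) : m * p / 2 ≤ 1 - (1 - p) ^ m := by
  have hmp0 : 0 ≤ (m : ℝ) * p := by positivity
  have key : (1 + m * p)⁻¹ ≤ 1 - m * p / 2 := by
    rw [inv_le_iff_one_le_mul₀' (by positivity)]
    nlinarith
  linarith [one_sub_pow_le_inv_one_add_mul hp0 hp1 m]

lemma one_sub_one_sub_pow_le_mul {p : ℝ} (hp : p ≤ 2) (m : ℕ) : 1 - (1 - p) ^ m ≤ m * p := by
  have := one_add_mul_le_pow (a := -p) (by linarith) m
  rw [← sub_eq_add_neg] at this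
  linarith

lemma half_le_div_one_add_mul {a Δ : ℝ} (ha : 0 ≤ a) (hΔ : 0 ≤ Δ) (hΔa : Δ * a ≤ 1) :
    a / 2 ≤ a / (1 + Δ * a) :=
  div_le_div_of_nonneg_left ha (by positivity) (by linarith)

lemma half_le_natCeil_one_sub_mul {ρ : ℝ} (hρ : ρ ≤ 1 / 2) (n : ℕ) :
    (n : ℝ) / 2 ≤ ⌈(1 - ρ) * n⌉₊ :=
  le_trans (by nlinarith [n.cast_nonneg (α := ℝ)]) (Nat.le_ceil _)

lemma natCeil_one_sub_mul_le {ρ : ℝ} (hρ : 0 ≤ ρ) (n : ℕ) : ⌈(1 - ρ) * n⌉₊ ≤ n :=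
  Nat.ceil_le.mpr (by nlinarith [n.cast_nonneg (α := ℝ)])

theorem stmt_4 (n : ℕ) (p ρ Δ : ℝ)
    (hp0 : 0 ≤ p) (hp1 : p ≤ 1) (hρ0 : 0 ≤ ρ) (hρ1 : ρ ≤ 1 / 2) (hΔ : 0 ≤ Δ)
    (hnp : (n : ℝ) * p ≤ 1) (hΔnp : Δ * n * p ≤ 1)
    (α γ : ℝ)
    (hα : α = 1 - (1 - p) ^ (⌈(1 - ρ) * n⌉₊))
    (hγ : γ = α / (1 + Δ * α)) :
    γ ≥ n * p / 8 := by
  set m := ⌈(1 - ρ) * n⌉₊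
  have hmn : (m : ℝ) ≤ n := by exact_mod_cast natCeil_one_sub_mul_le hρ0 n
  have hmp : (m : ℝ) * p ≤ 1 := (mul_le_mul_of_nonneg_right hmn hp0).trans hnp
  have hα_ge : n * p / 4 ≤ α := calc
    n * p / 4 ≤ m * p / 2 := by nlinarith [half_le_natCeil_one_sub_mul hρ1 n]
    _ ≤ α := hα ▸ mul_div_two_le_one_sub_one_sub_pow hp0 hp1 hmp
  have hΔα : Δ * α ≤ 1 := calc
    Δ * α ≤ Δ * (n * p) := by
      gcongr
      exact hα ▸ (one_sub_one_sub_pow_le_mul (by linarith) m).trans (by gcongr)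
    _ ≤ 1 := by rwa [← mul_assoc]
  rw [hγ, ge_iff_le]
  calc n * p / 8 ≤ α / 2 := by linarith
    _ ≤ α / (1 + Δ * α) := half_le_div_one_add_mul (by nlinarith) hΔ hΔα
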